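/- Let R be an integral domain, f ∈ R nonzero non-invertible, and a ∈ R. If a is irreducible in R and a is not associated with f (i.e., a is not a unit multiple of f), then the image of a in S = R[u,v]/(uv - f) is irreducible in S. -/

import Mathlib

open MvPolynomial

/-- The suspension ring `S = R[u,v]/(uv - f)`. -/
abbrev Susp (R : Type*) [CommRing R] (f : R) : Type _ :=
  MvPolynomial (Fin 2) R ⧸
    Ideal.span {(X 0 * X 1 - C f : MvPolynomial (Fin 2) R)}

/-- The image of the variable `u` in `S`. -/
noncomputable abbrev suspU (R : Type*) [CommRing R] (f : R) : Susp R f :=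
  Ideal.Quotient.mk _ (X 0)

/-- The image of the variable `v` in `S`. -/
noncomputable abbrev suspV (R : Type*) [CommRing R] (f : R) : Susp R f :=
  Ideal.Quotient.mk _ (X 1)

/-! The assignment `u ↦ T`, `v ↦ f T⁻¹` embeds `S` into `R[T;T⁻¹]` when `f` is a non-zero-divisor,
since every element of `S` is `F(u) + G(v)` and maps to `∑ Fₙ Tⁿ + ∑ fⁿ Gₙ T⁻ⁿ`; in particular the
`T⁻ⁿ`-coefficient of an element of `S` is divisible by `fⁿ`. Over a domain, every factorisation of
the constant `a` in `R[T;T⁻¹]` is `(r T^d) (s T^{-d})` with `r s = a`. For `d ≠ 0` one of `r`, `s`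
is then divisible by `f`, so `f ∣ a`, which is excluded for an irreducible `a` not associated with
`f`; for `d = 0` both factors lie in `R`, where `a` is irreducible. -/

namespace Polynomial

theorem exists_aeval_add_aeval_eq_mul {R A : Type*} [CommSemiring R] [CommSemiring A]
    [Algebra R A] {x y : A} {c : R} (h : x * y = algebraMap R A c) (p q : R[X]) :
    ∃ p' q' : R[X], aeval x p' + aeval y q' = (aeval x p + aeval y q) * x := by
  refine ⟨X * p + C (q.coeff 0) * X, C c * q.divX, ?_⟩
  conv_rhs => rw [← X_mul_divX_add q]
  simp only [map_add, map_mul, aeval_X, aeval_C, ← h]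
  ring

variable {R : Type*} [Semiring R]

theorem eq_C_mul_X_pow_of_natTrailingDegree_eq {p : R[X]}
    (h : p.natTrailingDegree = p.natDegree) : p = C p.leadingCoeff * X ^ p.natDegree := by
  ext n
  rw [coeff_C_mul_X_pow]
  obtain hn | rfl | hn := lt_trichotomy n p.natDegree
  · rw [if_neg hn.ne, coeff_eq_zero_of_lt_natTrailingDegree (h ▸ hn)]
  · rw [if_pos rfl, leadingCoeff]
  · rw [if_neg hn.ne', coeff_eq_zero_of_natDegree_lt hn]

theorem eq_C_mul_X_pow_of_mul_eq_C_mul_X_pow [NoZeroDivisors R] {p q : R[X]} {a : R} {k : ℕ}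
    (ha : a ≠ 0) (h : p * q = C a * X ^ k) : p = C p.leadingCoeff * X ^ p.natDegree := by
  nontriviality R
  have hpq : p * q ≠ 0 := by
    rw [h]
    exact mul_ne_zero (C_ne_zero.mpr ha) (pow_ne_zero _ X_ne_zero)
  have hp : p ≠ 0 := left_ne_zero_of_mul hpq
  have hq : q ≠ 0 := right_ne_zero_of_mul hpq
  have hdeg : p.natDegree + q.natDegree = k := by
    rw [← natDegree_mul hp hq, h, natDegree_C_mul_X_pow _ _ ha]
  have htrail : p.natTrailingDegree + q.natTrailingDegree = k := by
    rw [← natTrailingDegree_mul hp hq, h, C_mul_X_pow_eq_monomial, natTrailingDegree_monomial ha]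
  refine eq_C_mul_X_pow_of_natTrailingDegree_eq ?_
  have := natTrailingDegree_le_natDegree p
  have := natTrailingDegree_le_natDegree q
  omega

end Polynomial

namespace LaurentPolynomial

section Semiring

variable {R : Type*} [Semiring R]

theorem coeff_C_mul_T (r : R) (n m : ℤ) : (C r * T n).coeff m = if n = m then r else 0 := by
  simp [← single_eq_C_mul_T, Finsupp.single_apply]

theorem coeff_toLaurent_natCast (p : Polynomial R) (n : ℕ) :
    p.toLaurent.coeff n = p.coeff n := by
  rw [coeff_toLaurent]
  exact Finsupp.mapDomain_apply Nat.cast_injective _ n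

theorem coeff_toLaurent_of_neg (p : Polynomial R) {m : ℤ} (hm : m < 0) :
    p.toLaurent.coeff m = 0 := by
  rw [coeff_toLaurent]
  refine Finsupp.mapDomain_of_notMem_range _ _ ?_
  rintro ⟨n, rfl⟩
  exact (Int.natCast_nonneg n).not_gt hm

end Semiring

variable {R : Type*} [CommSemiring R]

theorem coeff_toLaurent_add_invert_natCast (p q : Polynomial R) {n : ℕ} (hn : n ≠ 0) :
    (p.toLaurent + invert q.toLaurent).coeff n = p.coeff n := by
  rw [AddMonoidAlgebra.coeff_add, Finsupp.add_apply, invert_apply, coeff_toLaurent_natCast,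
    coeff_toLaurent_of_neg q (by omega), add_zero]

theorem coeff_toLaurent_add_invert_neg_natCast (p q : Polynomial R) {n : ℕ} (hn : n ≠ 0) :
    (p.toLaurent + invert q.toLaurent).coeff (-n) = q.coeff n := by
  rw [AddMonoidAlgebra.coeff_add, Finsupp.add_apply, invert_apply, neg_neg,
    coeff_toLaurent_natCast, coeff_toLaurent_of_neg p (by omega), zero_add]

theorem coeff_toLaurent_add_invert_zero (p q : Polynomial R) :
    (p.toLaurent + invert q.toLaurent).coeff 0 = p.coeff 0 + q.coeff 0 := by
  rw [AddMonoidAlgebra.coeff_add, Finsupp.add_apply, invert_apply, neg_zero]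
  exact congrArg₂ (· + ·) (coeff_toLaurent_natCast p 0) (coeff_toLaurent_natCast q 0)

theorem exists_eq_C_mul_T_of_mul_eq_C [NoZeroDivisors R] {x y : R[T;T⁻¹]} {a : R} (ha : a ≠ 0)
    (h : x * y = C a) : ∃ (r : R) (d : ℤ), x = C r * T d := by
  obtain ⟨n, p, hp⟩ := exists_T_pow x
  obtain ⟨m, q, hq⟩ := exists_T_pow y
  have hpq : p * q = Polynomial.C a * Polynomial.X ^ (n + m) := by
    apply Polynomial.toLaurent_injective
    rw [map_mul, hp, hq, Polynomial.toLaurent_C_mul_X_pow, Nat.cast_add, T_add, ← h]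
    ring
  refine ⟨p.leadingCoeff, p.natDegree - n, ?_⟩
  rw [T_sub, ← mul_assoc, ← Polynomial.toLaurent_C_mul_X_pow,
    ← Polynomial.eq_C_mul_X_pow_of_mul_eq_C_mul_X_pow ha hpq, hp, mul_assoc, ← T_add]
  simp

theorem exists_eq_C_mul_T_and_eq_C_mul_T_neg_of_mul_eq_C [NoZeroDivisors R]
    {x y : R[T;T⁻¹]} {a : R} (ha : a ≠ 0) (h : x * y = C a) :
    ∃ (r s : R) (d : ℤ), r * s = a ∧ x = C r * T d ∧ y = C s * T (-d) := by
  obtain ⟨s, e, rfl⟩ := exists_eq_C_mul_T_of_mul_eq_C ha (mul_comm x y ▸ h)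
  obtain ⟨r, d, rfl⟩ := exists_eq_C_mul_T_of_mul_eq_C ha h
  have hCT : C (r * s) * T (d + e) = C a := by rw [← h, map_mul, T_add]; ring
  have h0 : (if d + e = 0 then r * s else 0) = a := by
    rw [← coeff_C_mul_T, hCT, C_apply, if_pos rfl]
  split_ifs at h0 with hde
  · exact ⟨r, s, d, h0, rfl, by rw [← neg_eq_of_add_eq_zero_right hde]⟩
  · exact absurd h0.symm ha

end LaurentPolynomial

namespace Susp

open LaurentPolynomial

variable {R : Type*} [CommRing R] (f : R)

theorem suspU_mul_suspV : suspU R f * suspV R f = algebraMap R (Susp R f) f :=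
  Ideal.Quotient.eq.mpr (Ideal.subset_span rfl)

theorem exists_aeval_add_aeval (s : Susp R f) :
    ∃ F G : Polynomial R, Polynomial.aeval (suspU R f) F + Polynomial.aeval (suspV R f) G = s := by
  obtain ⟨p, rfl⟩ := Ideal.Quotient.mk_surjective s
  induction p using MvPolynomial.induction_on with
  | C r => exact ⟨Polynomial.C r, 0, by simp; rfl⟩
  | add p q hp hq =>
    obtain ⟨F, G, hFG⟩ := hp
    obtain ⟨F', G', hFG'⟩ := hq
    refine ⟨F + F', G + G', ?_⟩
    rw [map_add (Ideal.Quotient.mk _) p q, ← hFG, ← hFG', map_add, map_add]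
    ring
  | mul_X p i hp =>
    obtain ⟨F, G, hFG⟩ := hp
    rw [map_mul, ← hFG]
    fin_cases i
    · exact Polynomial.exists_aeval_add_aeval_eq_mul (suspU_mul_suspV f) F G
    · obtain ⟨G', F', h⟩ := Polynomial.exists_aeval_add_aeval_eq_mul
        ((mul_comm _ _).trans (suspU_mul_suspV f)) G F
      exact ⟨F', G', by rw [add_comm, h, add_comm]; rfl⟩

noncomputable def toLaurent : Susp R f →ₐ[R] R[T;T⁻¹] :=
  Ideal.Quotient.liftₐ _ (aeval ![T 1, LaurentPolynomial.C f * T (-1)]) fun p hp => by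
    obtain ⟨q, rfl⟩ := Ideal.mem_span_singleton'.mp hp
    simp

theorem toLaurent_mk (p : MvPolynomial (Fin 2) R) :
    toLaurent f (Ideal.Quotient.mk _ p) = aeval ![T 1, LaurentPolynomial.C f * T (-1)] p :=
  rfl

theorem toLaurent_algebraMap (r : R) :
    toLaurent f (algebraMap R (Susp R f) r) = LaurentPolynomial.C r := by
  rw [AlgHom.commutes, ← LaurentPolynomial.C_eq_algebraMap]

theorem toLaurent_suspU : toLaurent f (suspU R f) = T 1 := by
  simp [toLaurent_mk]

theorem toLaurent_suspV : toLaurent f (suspV R f) = LaurentPolynomial.C f * T (-1) := by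
  simp [toLaurent_mk]

theorem toLaurent_aeval_suspU (F : Polynomial R) :
    toLaurent f (Polynomial.aeval (suspU R f) F) = F.toLaurent := by
  rw [← Polynomial.aeval_algHom_apply, toLaurent_suspU, ← Polynomial.toLaurent_X,
    ← Polynomial.toLaurentAlg_apply, Polynomial.aeval_algHom_apply, Polynomial.aeval_X_left_apply,
    Polynomial.toLaurentAlg_apply]

theorem toLaurent_aeval_suspV (G : Polynomial R) :
    toLaurent f (Polynomial.aeval (suspV R f) G) =
      invert (G.comp (Polynomial.C f * Polynomial.X)).toLaurent := by
  rw [← Polynomial.aeval_algHom_apply, toLaurent_suspV, ← Polynomial.toLaurentAlg_apply,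
    Polynomial.comp_eq_aeval, ← Polynomial.aeval_algHom_apply, ← Polynomial.aeval_algHom_apply]
  simp

theorem toLaurent_aeval_add_aeval (F G : Polynomial R) :
    toLaurent f (Polynomial.aeval (suspU R f) F + Polynomial.aeval (suspV R f) G) =
      F.toLaurent + invert (G.comp (Polynomial.C f * Polynomial.X)).toLaurent := by
  rw [map_add, toLaurent_aeval_suspU, toLaurent_aeval_suspV]

theorem pow_dvd_coeff_toLaurent_neg (s : Susp R f) (n : ℕ) :
    f ^ n ∣ (toLaurent f s).coeff (-n) := by
  obtain ⟨F, G, rfl⟩ := exists_aeval_add_aeval f s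
  rw [toLaurent_aeval_add_aeval]
  rcases eq_or_ne n 0 with rfl | hn
  · simp
  · rw [coeff_toLaurent_add_invert_neg_natCast _ _ hn, Polynomial.comp_C_mul_X_coeff]
    exact dvd_mul_left _ _

theorem dvd_of_toLaurent_eq_C_mul_T {s : Susp R f} {r : R} {d : ℤ} (hd : d < 0)
    (h : toLaurent f s = LaurentPolynomial.C r * T d) : f ∣ r := by
  have hdvd := pow_dvd_coeff_toLaurent_neg f s d.natAbs
  rw [show -(d.natAbs : ℤ) = d by omega, h, coeff_C_mul_T, if_pos rfl] at hdvd
  exact (dvd_pow_self f (by omega)).trans hdvd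

theorem toLaurent_injective (hf : f ∈ nonZeroDivisors R) : Function.Injective (toLaurent f) := by
  rw [injective_iff_map_eq_zero]
  intro s hs
  obtain ⟨F, G, rfl⟩ := exists_aeval_add_aeval f s
  rw [toLaurent_aeval_add_aeval] at hs
  have hF : F = Polynomial.C (F.coeff 0) := by
    refine Polynomial.eq_C_of_natDegree_le_zero (Polynomial.natDegree_le_iff_coeff_eq_zero.mpr ?_)
    intro n hn
    rw [← coeff_toLaurent_add_invert_natCast F _ hn.ne', hs]
    rfl
  have hG : G = Polynomial.C (G.coeff 0) := by
    refine Polynomial.eq_C_of_natDegree_le_zero (Polynomial.natDegree_le_iff_coeff_eq_zero.mpr ?_)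
    intro n hn
    rw [← mul_right_mem_nonZeroDivisors_eq_zero_iff (pow_mem hf n),
      ← Polynomial.comp_C_mul_X_coeff, ← coeff_toLaurent_add_invert_neg_natCast F _ hn.ne', hs]
    rfl
  have h0 := coeff_toLaurent_add_invert_zero F (G.comp (Polynomial.C f * Polynomial.X))
  rw [hs, Polynomial.comp_C_mul_X_coeff, pow_zero, mul_one] at h0
  rw [hF, hG, Polynomial.aeval_C, Polynomial.aeval_C, ← map_add, ← h0]
  exact map_zero _

end Susp

/-- If `a ∈ R` is irreducible in `R` and not associated with `f`, then the image
of `a` in `S = R[u,v]/(uv - f)` is irreducible in `S`. -/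
theorem irreducible_suspension_of_irreducible (R : Type*) [CommRing R] [IsDomain R]
    (f : R) (hf0 : f ≠ 0) (hf : ¬ IsUnit f) (a : R)
    (ha : Irreducible a) (hna : ¬ Associated a f) :
    Irreducible (algebraMap R (Susp R f) a) := by
  have hfa : ¬ f ∣ a := fun h => (ha.dvd_iff.mp h).elim hf hna
  refine ⟨fun hu => ha.not_isUnit ?_, fun x y hxy => ?_⟩
  · have hCa := (hu.map (Susp.toLaurent f)).map (LaurentPolynomial.eval₂ (RingHom.id R) 1)
    simpa [Susp.toLaurent_algebraMap] using hCa
  have hC : Susp.toLaurent f x * Susp.toLaurent f y = LaurentPolynomial.C a := by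
    rw [← map_mul, ← hxy, Susp.toLaurent_algebraMap]
  obtain ⟨r, s, d, hrs, hx, hy⟩ :=
    LaurentPolynomial.exists_eq_C_mul_T_and_eq_C_mul_T_neg_of_mul_eq_C ha.ne_zero hC
  rcases lt_trichotomy d 0 with hd | rfl | hd
  · exact absurd (hrs ▸ (Susp.dvd_of_toLaurent_eq_C_mul_T f hd hx).mul_right s) hfa
  · have hinj := Susp.toLaurent_injective f (mem_nonZeroDivisors_of_ne_zero hf0)
    have hxr : x = algebraMap R _ r := hinj (by simpa [Susp.toLaurent_algebraMap] using hx)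
    have hys : y = algebraMap R _ s := hinj (by simpa [Susp.toLaurent_algebraMap] using hy)
    exact (ha.isUnit_or_isUnit hrs.symm).imp (fun h => hxr ▸ h.map _) (fun h => hys ▸ h.map _)
  · exact absurd (hrs ▸ (Susp.dvd_of_toLaurent_eq_C_mul_T f (neg_lt_zero.mpr hd) hy).mul_left r) hfa
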